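/- arXiv:1310.6705 — 2 statements merged into one kernel-verified Lean document; each statement's English description precedes it below -/
import Mathlib

section
/- Let k be a field of characteristic ≠ 2 and let a, b, d, w ∈ k× with w a norm from k(√d)/k. If the quadratic form ⟨1, -a, -b, abd⟩ is isotropic over k, then the symbol (a, b, w) is trivial in H³(k, μ₂⊗²) (equivalently, the 3-fold Pfister form ⟨⟨a, b, w⟩⟩ is hyperbolic over k). -/
/-!
Write `φ = ⟨1, -a, -b, ab⟩` for the norm form of the quaternion algebra `(a, b)`, so that
`⟨⟨a, b, w⟩⟩ = φ ⊥ -wφ`. If `w` is a norm of `(a, b)`, left multiplication by a quaternion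
of norm `w` is a similarity of `φ` with factor `w`, hence `φ ⊥ -wφ ≅ φ ⊥ -φ`, which is
hyperbolic. So it suffices to write `w = g² - dh²` as a quaternion norm. If the isotropic vector
`x` of `⟨1, -a, -b, abd⟩` has `x₃ ≠ 0`, the pure quaternion `p = b x₂ i + a x₁ j + x₀ ij`
satisfies `p² = d (ab x₃)²`, so `g + h p / (ab x₃)` has norm `g² - dh²`. If `x₃ = 0`, then
`x` is an isotropic vector of the nondegenerate form `φ`, which is therefore universal.
-/

open scoped Quaternion

namespace QuadraticMap

theorem surjective_of_isotropic_of_notMem_radical {k V : Type*} [Field k] [AddCommGroup V]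
    [Module k V] {Q : QuadraticForm k V} {v : V} (hv : Q v = 0) (hrad : v ∉ Q.radical) :
    Function.Surjective Q := by
  obtain ⟨n, hn⟩ : ∃ n, Q (v + n) ≠ Q n := by simpa [mem_radical_iff', hv] using hrad
  have hpolar : polar Q v n = Q (v + n) - Q n := by simp [polar, hv]
  have hpolar_ne : Q (v + n) - Q n ≠ 0 := sub_ne_zero.2 hn
  intro c
  refine ⟨((c - Q n) / (Q (v + n) - Q n)) • v + n, ?_⟩
  rw [QuadraticMap.map_add Q, QuadraticMap.map_smul, polar_smul_left, hpolar, hv]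
  simp only [smul_eq_mul, mul_zero, zero_add]
  field_simp
  ring

section CommRing

variable {k ι : Type*} [CommRing k] [Fintype ι]

theorem weightedSumSquares_intCast (w : ι → ℤ) :
    weightedSumSquares k (fun i => (w i : k)) = weightedSumSquares k w := by
  ext x
  simp [weightedSumSquares_apply, zsmul_eq_mul]

theorem weightedSumSquares_smul (c : k) (w : ι → k) :
    weightedSumSquares k (c • w) = c • weightedSumSquares k w := by
  ext x
  simp [weightedSumSquares_apply, Finset.mul_sum, mul_assoc]

theorem equivalent_weightedSumSquares_comp {ι' : Type*} [Fintype ι'] (c : ι' → k)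
    (e : ι ≃ ι') : Equivalent (weightedSumSquares k (c ∘ e)) (weightedSumSquares k c) :=
  ⟨{ toLinearEquiv := (LinearEquiv.funCongrLeft k k e).symm
     map_app' := fun x => by
       simp only [weightedSumSquares_apply, LinearEquiv.funCongrLeft_symm]
       rw [← e.sum_comp]
       simp }⟩

theorem equivalent_weightedSumSquares_append {m n : ℕ} (u : Fin m → k) (v : Fin n → k) :
    Equivalent (weightedSumSquares k (Fin.append u v))
      ((weightedSumSquares k u).prod (weightedSumSquares k v)) :=
  ⟨{ toLinearEquiv := (LinearEquiv.funCongrLeft k k finSumFinEquiv).trans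
       (LinearEquiv.sumArrowLequivProdArrow _ _ k k)
     map_app' := fun x => by simp [weightedSumSquares_apply, Fin.sum_univ_add] }⟩

end CommRing

section Field

variable {k ι : Type*} [Field k] [NeZero (2 : k)] [Fintype ι]

theorem surjective_weightedSumSquares_of_isotropic {c : ι → k} (hc : ∀ i, c i ≠ 0)
    {v : ι → k} (hv : weightedSumSquares k c v = 0) (hv0 : v ≠ 0) :
    Function.Surjective (weightedSumSquares k c) := by
  refine surjective_of_isotropic_of_notMem_radical hv fun hrad => hv0 ?_
  rw [QuadraticForm.radical_weightedSumSquares, Pi.mem_spanSubset_iff] at hrad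
  exact funext fun i => hrad i (hc i)

/-- Coordinatewise, `c (x² - y²) = X² - Y²` where `X + Y = c (x + y)` and `X - Y = x - y`. -/
theorem equivalent_weightedSumSquares_prod_neg {c : ι → k} (hc : ∀ i, c i ≠ 0) :
    Equivalent ((weightedSumSquares k c).prod (weightedSumSquares k (-c)))
      ((weightedSumSquares k (1 : ι → k)).prod (weightedSumSquares k (-1 : ι → k))) := by
  have h2 : (2 : k) ≠ 0 := NeZero.ne 2
  refine ⟨{
    toFun := fun p => (fun i => ((c i + 1) * p.1 i + (c i - 1) * p.2 i) / 2,
      fun i => ((c i - 1) * p.1 i + (c i + 1) * p.2 i) / 2)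
    invFun := fun p => (fun i => (((c i)⁻¹ + 1) * p.1 i + ((c i)⁻¹ - 1) * p.2 i) / 2,
      fun i => (((c i)⁻¹ - 1) * p.1 i + ((c i)⁻¹ + 1) * p.2 i) / 2)
    map_add' := fun p q => by
      ext i <;> simp only [Prod.fst_add, Prod.snd_add, Pi.add_apply] <;> ring
    map_smul' := fun r p => by
      ext i <;> simp only [Prod.smul_fst, Prod.smul_snd, Pi.smul_apply, smul_eq_mul,
        RingHom.id_apply] <;> ring
    left_inv := fun p => by ext i <;> field_simp [hc i] <;> ring
    right_inv := fun p => by ext i <;> field_simp [hc i] <;> ring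
    map_app' := fun p => by
      simp only [prod_apply, weightedSumSquares_apply, ← Finset.sum_add_distrib]
      refine Finset.sum_congr rfl fun i _ => ?_
      simp only [Pi.one_apply, Pi.neg_apply, smul_eq_mul]
      field_simp
      ring }⟩

end Field

end QuadraticMap

namespace QuaternionAlgebra

open QuadraticMap

section CommRing

variable {k : Type*} [CommRing k] {a b : k}

def normWeights (a b : k) : Fin 4 → k := ![1, -a, -b, a * b]

def reducedNorm (x : ℍ[k,a,0,b]) : k :=
  weightedSumSquares k (normWeights a b) (linearEquivTuple a 0 b x)

theorem weightedSumSquares_linearEquivTuple (x : ℍ[k,a,0,b]) :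
    weightedSumSquares k (normWeights a b) (linearEquivTuple a 0 b x) = reducedNorm x :=
  rfl

theorem reducedNorm_eq (x : ℍ[k,a,0,b]) :
    reducedNorm x = x.re ^ 2 - a * x.imI ^ 2 - b * x.imJ ^ 2 + a * b * x.imK ^ 2 := by
  simp only [reducedNorm, normWeights, coe_linearEquivTuple, equivTuple_apply,
    weightedSumSquares_apply, smul_eq_mul, Fin.sum_univ_four, Matrix.cons_val_zero,
    Matrix.cons_val_one, Matrix.cons_val]
  ring

theorem mul_star_eq_reducedNorm (x : ℍ[k,a,0,b]) : x * star x = reducedNorm x := by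
  ext <;> simp only [reducedNorm_eq, re_coe, imI_coe, imJ_coe, imK_coe, re_mul, imI_mul,
    imJ_mul, imK_mul, re_star, imI_star, imJ_star, imK_star] <;> ring

theorem star_mul_eq_reducedNorm (x : ℍ[k,a,0,b]) : star x * x = reducedNorm x := by
  ext <;> simp only [reducedNorm_eq, re_coe, imI_coe, imJ_coe, imK_coe, re_mul, imI_mul,
    imJ_mul, imK_mul, re_star, imI_star, imJ_star, imK_star] <;> ring

theorem reducedNorm_mul (x y : ℍ[k,a,0,b]) :
    reducedNorm (x * y) = reducedNorm x * reducedNorm y := by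
  simp only [reducedNorm_eq, re_mul, imI_mul, imJ_mul, imK_mul]
  ring

end CommRing

section Field

variable {k : Type*} [Field k] {a b : k}

theorem normWeights_ne_zero (ha : a ≠ 0) (hb : b ≠ 0) (i : Fin 4) : normWeights a b i ≠ 0 := by
  fin_cases i <;> simp [normWeights, ha, hb]

def unitOfReducedNorm (q : ℍ[k,a,0,b]) (hq : reducedNorm q ≠ 0) : (ℍ[k,a,0,b])ˣ where
  val := q
  inv := (reducedNorm q)⁻¹ • star q
  val_inv := by rw [mul_smul_comm, mul_star_eq_reducedNorm]; ext <;> simp [hq]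
  inv_val := by rw [smul_mul_assoc, star_mul_eq_reducedNorm]; ext <;> simp [hq]

theorem equivalent_weightedSumSquares_smul_reducedNorm (q : ℍ[k,a,0,b])
    (hq : reducedNorm q ≠ 0) (c : k) :
    Equivalent (weightedSumSquares k ((c * reducedNorm q) • normWeights a b))
      (weightedSumSquares k (c • normWeights a b)) :=
  ⟨{ toLinearEquiv := (linearEquivTuple a 0 b).symm ≪≫ₗ
       DistribMulAction.toLinearEquiv k _ (unitOfReducedNorm q hq) ≪≫ₗ linearEquivTuple a 0 b
     map_app' := fun x => by
       obtain ⟨y, rfl⟩ := (linearEquivTuple a 0 b).surjective x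
       change weightedSumSquares k _
         (linearEquivTuple a 0 b (q * (linearEquivTuple a 0 b).symm (linearEquivTuple a 0 b y))) = _
       simp only [LinearEquiv.symm_apply_apply, weightedSumSquares_smul, smul_apply,
         weightedSumSquares_linearEquivTuple, reducedNorm_mul, smul_eq_mul, mul_assoc] }⟩

theorem exists_reducedNorm_eq_of_isotropic [NeZero (2 : k)] (ha : a ≠ 0) (hb : b ≠ 0)
    {d w : k} (hnorm : ∃ g h : k, w = g ^ 2 - d * h ^ 2)
    (hiso : ∃ x : Fin 4 → k, weightedSumSquares k ![1, -a, -b, a * b * d] x = 0 ∧ x ≠ 0) :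
    ∃ q : ℍ[k,a,0,b], reducedNorm q = w := by
  obtain ⟨g, h, rfl⟩ := hnorm
  obtain ⟨x, hx, hx0⟩ := hiso
  have hx' : x 0 ^ 2 - a * x 1 ^ 2 - b * x 2 ^ 2 + a * b * d * x 3 ^ 2 = 0 := by
    rw [← hx]
    simp only [weightedSumSquares_apply, smul_eq_mul, Fin.sum_univ_four, Matrix.cons_val_zero,
      Matrix.cons_val_one, Matrix.cons_val]
    ring
  by_cases h3 : x 3 = 0
  · have hxφ : weightedSumSquares k (normWeights a b) x = 0 := by
      simp only [normWeights, weightedSumSquares_apply, smul_eq_mul, Fin.sum_univ_four,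
        Matrix.cons_val_zero, Matrix.cons_val_one, Matrix.cons_val]
      linear_combination hx' + a * b * (1 - d) * x 3 * h3
    obtain ⟨y, hy⟩ := surjective_weightedSumSquares_of_isotropic (normWeights_ne_zero ha hb)
      hxφ hx0 (g ^ 2 - d * h ^ 2)
    refine ⟨(linearEquivTuple a 0 b).symm y, ?_⟩
    rw [← weightedSumSquares_linearEquivTuple, LinearEquiv.apply_symm_apply, hy]
  · refine ⟨⟨g, h * b * x 2 / (a * b * x 3), h * a * x 1 / (a * b * x 3),
      h * x 0 / (a * b * x 3)⟩, ?_⟩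
    rw [reducedNorm_eq]
    field_simp
    linear_combination h ^ 2 * hx'

end Field

end QuaternionAlgebra

open QuadraticMap QuaternionAlgebra

theorem stmt_0_general (k : Type) [Field k] (hchar : (2 : k) ≠ 0)
    (a b d w : k) (ha : a ≠ 0) (hb : b ≠ 0) (hw : w ≠ 0)
    (hnorm : ∃ g h : k, w = g ^ 2 - d * h ^ 2)
    (hiso : ∃ x : Fin 4 → k,
      QuadraticMap.weightedSumSquares k ![1, -a, -b, a * b * d] x = 0 ∧ x ≠ 0) :
    QuadraticMap.Equivalent
      (QuadraticMap.weightedSumSquares k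
        ![1, -a, -b, a * b, -w, a * w, b * w, -(a * b * w)])
      (QuadraticMap.weightedSumSquares k
        ![1, -1, 1, -1, 1, -1, 1, -1]) := by
  have : NeZero (2 : k) := ⟨hchar⟩
  obtain ⟨q, rfl⟩ := exists_reducedNorm_eq_of_isotropic ha hb hnorm hiso
  have hpfister : ![1, -a, -b, a * b, -q.reducedNorm, a * q.reducedNorm, b * q.reducedNorm,
      -(a * b * q.reducedNorm)] =
      Fin.append (normWeights a b) ((-1 * q.reducedNorm) • normWeights a b) := by
    funext i
    fin_cases i <;> simp [normWeights, Fin.append, Fin.addCases] <;> ring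
  have hsplit : (fun i => ((![1, -1, 1, -1, 1, -1, 1, -1] : Fin 8 → ℤ) i : k)) =
      Fin.append (1 : Fin 4 → k) (-1 : Fin 4 → k) ∘
        ⇑(Equiv.swap 1 4 * Equiv.swap 3 6 : Equiv.Perm (Fin 8)) := by
    funext i
    fin_cases i <;> simp [Fin.append, Fin.addCases, Equiv.swap_apply_def]
  have hsimilar : Equivalent (weightedSumSquares k ((-1 * q.reducedNorm) • normWeights a b))
      (weightedSumSquares k (-normWeights a b)) := by
    simpa using equivalent_weightedSumSquares_smul_reducedNorm q hw (-1)
  rw [← weightedSumSquares_intCast, hsplit, hpfister]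
  refine (equivalent_weightedSumSquares_append _ _).trans ?_
  refine ((Equivalent.refl _).prod hsimilar).trans ?_
  exact (equivalent_weightedSumSquares_prod_neg (normWeights_ne_zero ha hb)).trans
    ((equivalent_weightedSumSquares_append _ _).symm.trans
      (equivalent_weightedSumSquares_comp _ _).symm)

theorem stmt_0 (k : Type) [Field k] (hchar : (2 : k) ≠ 0)
    (a b d w : k) (ha : a ≠ 0) (hb : b ≠ 0) (hd : d ≠ 0) (hw : w ≠ 0)
    (hnorm : ∃ g h : k, w = g ^ 2 - d * h ^ 2)
    (hiso : ∃ x : Fin 4 → k,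
      QuadraticMap.weightedSumSquares k ![1, -a, -b, a * b * d] x = 0 ∧ x ≠ 0) :
    QuadraticMap.Equivalent
      (QuadraticMap.weightedSumSquares k
        ![1, -a, -b, a * b, -w, a * w, b * w, -(a * b * w)])
      (QuadraticMap.weightedSumSquares k
        ![1, -1, 1, -1, 1, -1, 1, -1]) :=
  stmt_0_general k hchar a b d w ha hb hw hnorm hiso
end

section
/- Let k be a field of characteristic ≠ 2 and a, b, d, f ∈ k× such that f is a norm from k(√d)/k. Then the 3-fold Pfister form ⟨⟨-ab, -ad, f⟩⟩ contains (is isometric to an orthogonal sum involving) the 4-dimensional form d·⟨1, a, b, abd⟩ as a subform. -/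
/-!
Since `f = g² - d h²` is a norm from `k(√d)`, the binary form `⟨1, -f⟩` represents `d`, and a
binary form `⟨1, -f⟩` representing `d ≠ 0` is isometric to `d⟨1, -f⟩ = ⟨d, -df⟩` (it is the norm
form of `k(√f)`, whose values form a group). Writing the Pfister form as `⟨1, -f⟩ ⊥ B ⊥ -f B` with
`B = ⟨ab, ad, a²bd⟩` and replacing `⟨1, -f⟩` by `⟨d, -df⟩` gives `(⟨d⟩ ⊥ B) ⊥ (⟨-df⟩ ⊥ -f B)`,
and `⟨d⟩ ⊥ B ≅ ⟨d, da, db, abd²⟩` after permuting and rescaling by the squares `a²` and `d²`.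
-/

open QuadraticMap

namespace QuadraticMap

section

variable {R M₁ M₂ M₃ N : Type*} [CommSemiring R] [AddCommMonoid M₁] [AddCommMonoid M₂]
  [AddCommMonoid M₃] [AddCommMonoid N] [Module R M₁] [Module R M₂] [Module R M₃]
  [Module R N]

instance : @Trans (QuadraticMap R M₁ N) (QuadraticMap R M₂ N) (QuadraticMap R M₃ N)
    Equivalent Equivalent Equivalent :=
  ⟨Equivalent.trans⟩

end

section

variable {R : Type*} [CommSemiring R]

theorem weightedSumSquares_append_equivalent_prod {m n : ℕ} (u : Fin m → R) (v : Fin n → R) :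
    (weightedSumSquares R (Fin.append u v)).Equivalent
      ((weightedSumSquares R u).prod (weightedSumSquares R v)) :=
  ⟨{ (Fin.appendEquiv m n).symm with
     map_add' := fun _ _ => rfl
     map_smul' := fun _ _ => rfl
     map_app' := fun x => by simp [Fin.sum_univ_add] }⟩

theorem weightedSumSquares_cons_equivalent_prod {n : ℕ} (c : R) (w : Fin n → R) :
    (weightedSumSquares R (Fin.cons c w : Fin (n + 1) → R)).Equivalent
      ((weightedSumSquares R ![c]).prod (weightedSumSquares R w)) :=
  ⟨{ toFun := fun x => (![x 0], Fin.tail x)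
     invFun := fun p => Fin.cons (p.1 0) p.2
     map_add' := fun _ _ => by ext i <;> (try fin_cases i) <;> rfl
     map_smul' := fun _ _ => by ext i <;> (try fin_cases i) <;> rfl
     left_inv := Fin.cons_self_tail
     right_inv := fun _ => by ext i <;> (try fin_cases i) <;> rfl
     map_app' := fun x => by simp [Fin.sum_univ_succ, Fin.tail] }⟩

theorem weightedSumSquares_equivalent_of_mul_sq_eq {ι κ : Type*} [Fintype ι] [Fintype κ]
    (σ : ι ≃ κ) (u : ι → Rˣ) {w : κ → R} {w' : ι → R}
    (h : ∀ i, w' i * u i ^ 2 = w (σ i)) :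
    (weightedSumSquares R w).Equivalent (weightedSumSquares R w') :=
  Equivalent.trans
    ⟨{ LinearEquiv.funCongrLeft R R σ with
       map_app' := fun x => by
         simpa [LinearEquiv.funCongrLeft_apply] using
           Equiv.sum_comp σ fun j => w j * (x j * x j) }⟩
    ⟨QuadraticForm.isometryEquivWeightedSumSquaresWeightedSumSquares u h⟩

theorem weightedSumSquares_cons_prod_cons_equivalent {m n : ℕ} {x y x' y' : R}
    {u u' : Fin m → R} {v v' : Fin n → R}
    (hxy : (weightedSumSquares R ![x, y]).Equivalent (weightedSumSquares R ![x', y']))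
    (hu : (weightedSumSquares R u).Equivalent (weightedSumSquares R u'))
    (hv : (weightedSumSquares R v).Equivalent (weightedSumSquares R v')) :
    ((weightedSumSquares R (Fin.cons x u)).prod (weightedSumSquares R (Fin.cons y v))).Equivalent
      ((weightedSumSquares R (Fin.cons x' u')).prod (weightedSumSquares R (Fin.cons y' v'))) := by
  have hxy' : ((weightedSumSquares R ![x]).prod (weightedSumSquares R ![y])).Equivalent
      ((weightedSumSquares R ![x']).prod (weightedSumSquares R ![y'])) :=
    ((weightedSumSquares_cons_equivalent_prod _ _).symm.trans hxy).trans
      (weightedSumSquares_cons_equivalent_prod _ _)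
  calc _
    Equivalent _ (((weightedSumSquares R ![x]).prod (weightedSumSquares R u)).prod
          ((weightedSumSquares R ![y]).prod (weightedSumSquares R v))) :=
        (weightedSumSquares_cons_equivalent_prod _ _).prod
          (weightedSumSquares_cons_equivalent_prod _ _)
    Equivalent _ (((weightedSumSquares R ![x]).prod (weightedSumSquares R ![y])).prod
          ((weightedSumSquares R u).prod (weightedSumSquares R v))) :=
        ⟨IsometryEquiv.prodProdProdComm _ _ _ _⟩
    Equivalent _ (((weightedSumSquares R ![x']).prod (weightedSumSquares R ![y'])).prod
          ((weightedSumSquares R u').prod (weightedSumSquares R v'))) :=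
        hxy'.prod (hu.prod hv)
    Equivalent _ (((weightedSumSquares R ![x']).prod (weightedSumSquares R u')).prod
          ((weightedSumSquares R ![y']).prod (weightedSumSquares R v'))) :=
        ⟨IsometryEquiv.prodProdProdComm _ _ _ _⟩
    Equivalent _ _ :=
        (weightedSumSquares_cons_equivalent_prod _ _).symm.prod
          (weightedSumSquares_cons_equivalent_prod _ _).symm

end

end QuadraticMap

section

variable {k : Type*} [Field k]

theorem exists_sq_sub_mul_sq_eq_of_eq_sq_sub_mul_sq (hchar : (2 : k) ≠ 0) {d f g h : k}
    (hf : f ≠ 0) (hfgh : f = g ^ 2 - d * h ^ 2) : ∃ s t : k, s ^ 2 - f * t ^ 2 = d := by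
  by_cases hh : h = 0
  · -- `f = g²`, so `⟨1, -f⟩` is hyperbolic and represents everything
    have hg : g ≠ 0 := by rintro rfl; simp [hh, hfgh] at hf
    refine ⟨(d + 1) / 2, (d - 1) / (2 * g), ?_⟩
    rw [hfgh, hh]
    field_simp
    ring
  · refine ⟨g / h, 1 / h, ?_⟩
    rw [hfgh]
    field_simp
    ring

theorem weightedSumSquares_one_neg_equivalent_mul {f s t d : k} (hd : d ≠ 0)
    (hst : s ^ 2 - f * t ^ 2 = d) :
    (weightedSumSquares k ![1, -f]).Equivalent (weightedSumSquares k ![d, -(d * f)]) :=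
  -- `x + y√f ↦ (x + y√f)(s - t√f)/d`; the norm from `k(√f)` is multiplicative
  ⟨{ toFun := fun x => ![(s * x 0 - f * t * x 1) / d, (s * x 1 - t * x 0) / d]
     invFun := fun y => ![s * y 0 + f * t * y 1, t * y 0 + s * y 1]
     map_add' := fun x y => by
       ext i; fin_cases i <;> simp only
         [Fin.zero_eta, Fin.mk_one, Fin.isValue, Matrix.cons_val_zero, Matrix.cons_val_one,
           Matrix.cons_val_fin_one, Pi.add_apply] <;> ring
     map_smul' := fun c x => by
       ext i; fin_cases i <;> simp only
         [Fin.zero_eta, Fin.mk_one, Fin.isValue, Matrix.cons_val_zero, Matrix.cons_val_one,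
           Matrix.cons_val_fin_one, Pi.smul_apply, smul_eq_mul,
           RingHom.id_apply] <;> ring
     left_inv := fun x => by
       ext i; fin_cases i <;> simp only
         [Fin.zero_eta, Fin.mk_one, Fin.isValue, Matrix.cons_val_zero, Matrix.cons_val_one,
           Matrix.cons_val_fin_one] <;> field_simp
       · linear_combination x 0 * hst
       · linear_combination x 1 * hst
     right_inv := fun y => by
       ext i; fin_cases i <;> simp only
         [Fin.zero_eta, Fin.mk_one, Fin.isValue, Matrix.cons_val_zero, Matrix.cons_val_one,
           Matrix.cons_val_fin_one] <;> field_simp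
       · linear_combination y 0 * hst
       · linear_combination y 1 * hst
     map_app' := fun x => by
       simp only [weightedSumSquares_apply, smul_eq_mul, Fin.sum_univ_two, Matrix.cons_val_zero,
         Matrix.cons_val_one, Matrix.cons_val_fin_one]
       field_simp
       linear_combination (x 0 ^ 2 - f * x 1 ^ 2) * hst }⟩

end

theorem stmt_1_general (k : Type) [Field k] (hchar : (2 : k) ≠ 0)
    (a b d f : k) (ha : a ≠ 0) (hd : d ≠ 0) (hf : f ≠ 0)
    (hnorm : ∃ g h : k, f = g ^ 2 - d * h ^ 2) :
    ∃ r : QuadraticMap k (Fin 4 → k) k,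
      QuadraticMap.Equivalent
        (QuadraticMap.weightedSumSquares k
          ![1, a * b, a * d, a * b * (a * d),
            -f, -(f * (a * b)), -(f * (a * d)), -(f * (a * b * (a * d)))])
        (QuadraticMap.prod
          (QuadraticMap.weightedSumSquares k ![d, d * a, d * b, d * (a * b * d)])
          r) := by
  obtain ⟨g, h, hfgh⟩ := hnorm
  obtain ⟨s, t, hst⟩ := exists_sq_sub_mul_sq_eq_of_eq_sq_sub_mul_sq hchar hf hfgh
  set B := ![a * b, a * d, a * b * (a * d)]
  set C := ![-(f * (a * b)), -(f * (a * d)), -(f * (a * b * (a * d)))]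
  have hB : (weightedSumSquares k B).Equivalent
      (weightedSumSquares k ![d * a, d * b, d * (a * b * d)]) :=
    weightedSumSquares_equivalent_of_mul_sq_eq (finRotate 3)
      ![1, Units.mk0 a ha, (Units.mk0 d hd)⁻¹] fun i => by
        fin_cases i <;>
          simp only [B, finRotate_apply, Fin.reduceFinMk, Fin.reduceAdd, Matrix.cons_val,
            Units.val_one, Units.val_mk0, Units.val_inv_eq_inv_val] <;> field_simp
  refine ⟨weightedSumSquares k (Fin.cons (-(d * f)) C), ?_⟩
  calc weightedSumSquares k _
      = weightedSumSquares k (Fin.append (Fin.cons 1 B) (Fin.cons (-f) C)) := by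
        congr 1; ext i; fin_cases i <;> rfl
    Equivalent _ ((weightedSumSquares k (Fin.cons 1 B)).prod
          (weightedSumSquares k (Fin.cons (-f) C))) :=
        weightedSumSquares_append_equivalent_prod _ _
    Equivalent _ _ :=
        weightedSumSquares_cons_prod_cons_equivalent
          (weightedSumSquares_one_neg_equivalent_mul hd hst) hB (.refl _)

theorem stmt_1 (k : Type) [Field k] (hchar : (2 : k) ≠ 0)
    (a b d f : k) (ha : a ≠ 0) (hb : b ≠ 0) (hd : d ≠ 0) (hf : f ≠ 0)
    (hnorm : ∃ g h : k, f = g ^ 2 - d * h ^ 2) :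
    ∃ r : QuadraticMap k (Fin 4 → k) k,
      QuadraticMap.Equivalent
        (QuadraticMap.weightedSumSquares k
          ![1, a * b, a * d, a * b * (a * d),
            -f, -(f * (a * b)), -(f * (a * d)), -(f * (a * b * (a * d)))])
        (QuadraticMap.prod
          (QuadraticMap.weightedSumSquares k ![d, d * a, d * b, d * (a * b * d)])
          r) :=
  stmt_1_general k hchar a b d f ha hd hf hnorm
end
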